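/- Let d ≥ 1 and a₁,…,a_d ≥ 1 be integers, and let A be a subset of the vertex set of the grid [a₁]×⋯×[a_d]. Suppose that for every j ∈ {1,…,d}, every path in the grid from a vertex of the face L_{j,1} to a vertex of the face L_{j,a_j} contains a vertex of A. Then A percolates under the d-neighbour bootstrap process in [a₁]×⋯×[a_d]. -/

import Mathlib

/-!
Let `C` be the closure of `A` and suppose some `v₀ ∉ C`. Let `D` be the set of vertices reached
from `v₀` by walks avoiding `C`. As `A ⊆ C`, a path inside `D` meets no vertex of `A`, so in each
direction `j` the set `D` misses one of the two faces; let `ε j = ±1` point away from it. A vertex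
`v ∈ D` maximising `∑ j, ε j * v j` then has, in every direction `j`, the neighbour obtained by
moving `v j` by `ε j`, and that neighbour lies outside `D`, hence in `C`. These `d` neighbours in
`C` put `v` into `C`, a contradiction.
-/

namespace BP

/-- The `r`-neighbour bootstrap closure of `A₀` in `G`: the smallest set `S` containing `A₀`
such that every vertex with at least `r` neighbours in `S` belongs to `S`. -/
def closure {V : Type*} (G : SimpleGraph V) (r : ℕ) (A₀ : Set V) : Set V :=
  ⋂₀ {S : Set V | A₀ ⊆ S ∧ ∀ v : V, r ≤ (G.neighborSet v ∩ S).ncard → v ∈ S}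

/-- `A₀` percolates under the `r`-neighbour bootstrap process in `G`. -/
def Percolates {V : Type*} (G : SimpleGraph V) (r : ℕ) (A₀ : Set V) : Prop :=
  closure G r A₀ = Set.univ

/-- The minimum cardinality of a set percolating under the `r`-neighbour process in `G`. -/
noncomputable def minPerc {V : Type*} (G : SimpleGraph V) (r : ℕ) : ℕ :=
  sInf {n : ℕ | ∃ A₀ : Set V, Percolates G r A₀ ∧ A₀.ncard = n}

/-- The `d`-dimensional grid graph `[a 0] × ⋯ × [a (d-1)]`. -/
def gridD (d : ℕ) (a : Fin d → ℕ) : SimpleGraph ((i : Fin d) → Fin (a i)) where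
  Adj u v := ∃ j : Fin d,
    ((u j : ℕ) + 1 = (v j : ℕ) ∨ (v j : ℕ) + 1 = (u j : ℕ)) ∧
      ∀ i : Fin d, i ≠ j → u i = v i
  symm := by
    constructor
    rintro u v ⟨j, hj, h⟩
    exact ⟨j, hj.symm, fun i hi => (h i hi).symm⟩
  loopless := by
    constructor
    rintro u ⟨j, hj, -⟩
    omega


section Closure

variable {V : Type*} {G : SimpleGraph V} {r : ℕ} {A₀ : Set V}

theorem subset_closure : A₀ ⊆ closure G r A₀ :=
  fun _ hx => Set.mem_sInter.2 fun _ hS => hS.1 hx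

theorem mem_closure_of_le_ncard [G.LocallyFinite] {v : V}
    (h : r ≤ (G.neighborSet v ∩ closure G r A₀).ncard) : v ∈ closure G r A₀ :=
  Set.mem_sInter.2 fun S hS => hS.2 v <| h.trans <|
    Set.ncard_le_ncard (Set.inter_subset_inter_right _ (Set.sInter_subset_of_mem hS))
      ((G.neighborSet v).toFinite.inter_of_left S)

theorem mem_closure_of_injective [G.LocallyFinite] {v : V} (f : Fin r → V)
    (hf : Function.Injective f) (hadj : ∀ i, G.Adj v (f i))
    (hmem : ∀ i, f i ∈ closure G r A₀) : v ∈ closure G r A₀ := by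
  refine mem_closure_of_le_ncard ?_
  have := Set.ncard_le_ncard_of_injOn f (s := Set.univ)
    (t := G.neighborSet v ∩ closure G r A₀)
    (fun i _ => ⟨hadj i, hmem i⟩) hf.injOn
    ((G.neighborSet v).toFinite.inter_of_left _)
  simpa using this

end Closure

section AvoidingWalks

variable {V : Type*} (G : SimpleGraph V) (C : Set V) (v₀ : V)

def reachAvoiding : Set V :=
  {w | ∃ p : G.Walk v₀ w, ∀ x ∈ p.support, x ∉ C}

variable {G C v₀}

theorem start_mem_reachAvoiding (h : v₀ ∉ C) : v₀ ∈ reachAvoiding G C v₀ :=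
  ⟨.nil, by simpa using h⟩

theorem notMem_of_mem_reachAvoiding {w : V} (hw : w ∈ reachAvoiding G C v₀) : w ∉ C :=
  let ⟨p, hp⟩ := hw
  hp w p.end_mem_support

theorem mem_reachAvoiding_of_adj {w u : V} (hw : w ∈ reachAvoiding G C v₀) (hadj : G.Adj w u)
    (hu : u ∉ C) : u ∈ reachAvoiding G C v₀ := by
  obtain ⟨p, hp⟩ := hw
  refine ⟨p.concat hadj, fun x hx => ?_⟩
  rw [SimpleGraph.Walk.support_concat, List.mem_append, List.mem_singleton] at hx
  rcases hx with hx | rfl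
  exacts [hp x hx, hu]

theorem exists_isPath_avoiding [DecidableEq V] {u w : V} (hu : u ∈ reachAvoiding G C v₀)
    (hw : w ∈ reachAvoiding G C v₀) :
    ∃ p : G.Walk u w, p.IsPath ∧ ∀ x ∈ p.support, x ∉ C := by
  obtain ⟨p, hp⟩ := hu
  obtain ⟨q, hq⟩ := hw
  refine ⟨(p.reverse.append q).bypass, (p.reverse.append q).bypass_isPath, fun x hx => ?_⟩
  have hx' := (p.reverse.append q).support_bypass_subset_support hx
  rw [SimpleGraph.Walk.mem_support_append_iff, SimpleGraph.Walk.support_reverse,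
    List.mem_reverse] at hx'
  exact hx'.elim (hp x) (hq x)

end AvoidingWalks

theorem update_injective_of_forall_ne {ι : Type*} [DecidableEq ι] {β : ι → Type*}
    (v : ∀ i, β i) (c : ∀ i, β i) (hc : ∀ i, c i ≠ v i) :
    Function.Injective fun i => Function.update v i (c i) := by
  intro i j h
  by_contra hij
  have := congrFun h i
  simp only [Function.update_self, Function.update_of_ne hij] at this
  exact hc i this

theorem sum_update_sub_sum {ι : Type*} [Fintype ι] [DecidableEq ι] {β : ι → Type*}
    {M : Type*} [AddCommGroup M] (φ : ∀ i, β i → M) (v : ∀ i, β i) (j : ι) (c : β j) :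
    ∑ i, φ i (Function.update v j c i) - ∑ i, φ i (v i) = φ j c - φ j (v j) := by
  rw [← Finset.sum_sub_distrib, Finset.sum_eq_single j]
  · rw [Function.update_self]
  · intro i _ hij
    rw [Function.update_of_ne hij, sub_self]
  · simp

section Grid

variable {d : ℕ} {a : Fin d → ℕ}

theorem gridD_adj_update (v : ∀ i, Fin (a i)) {j : Fin d} {c : Fin (a j)}
    (h : (v j : ℕ) + 1 = c ∨ (c : ℕ) + 1 = v j) : (gridD d a).Adj v (Function.update v j c) :=
  ⟨j, by rwa [Function.update_self], fun _ hi => (Function.update_of_ne hi _ _).symm⟩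

theorem exists_mem_forall_update_notMem (D : Set (∀ i, Fin (a i))) (hne : D.Nonempty)
    (hface : ∀ j, (∀ w ∈ D, (w j : ℕ) ≠ 0) ∨ (∀ w ∈ D, (w j : ℕ) + 1 ≠ a j)) :
    ∃ v ∈ D, ∃ c : ∀ j, Fin (a j), ∀ j,
      ((v j : ℕ) + 1 = c j ∨ (c j : ℕ) + 1 = v j) ∧ Function.update v j (c j) ∉ D := by
  have hdir : ∀ j, ∃ e : ℤ, (e = 1 ∨ e = -1) ∧ ∀ w ∈ D, ∃ c : Fin (a j), (c : ℤ) = w j + e := by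
    intro j
    rcases hface j with hbot | htop
    · refine ⟨-1, Or.inr rfl, fun w hw => ⟨⟨w j - 1, by omega⟩, ?_⟩⟩
      have := hbot w hw
      push_cast [Nat.one_le_iff_ne_zero.2 this]
      ring
    · refine ⟨1, Or.inl rfl, fun w hw => ⟨⟨w j + 1, ?_⟩, by push_cast; ring⟩⟩
      have := htop w hw
      omega
  choose ε hε hstep using hdir
  obtain ⟨v, hvD, hvmax⟩ := D.exists_max_image (fun w => ∑ i, ε i * (w i : ℤ)) D.toFinite hne
  choose c hc using fun j => hstep j v hvD
  refine ⟨v, hvD, c, fun j => ⟨by have := hc j; rcases hε j with h | h <;> omega, fun hmem => ?_⟩⟩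
  have hgain := sum_update_sub_sum (fun i (x : Fin (a i)) => ε i * (x : ℤ)) v j (c j)
  have hmax := hvmax _ hmem
  simp only [hc] at hgain hmax
  rcases hε j with h | h <;> simp only [h] at hgain <;> linarith

end Grid

theorem separating_set_percolates_general (d : ℕ) (a : Fin d → ℕ)
    (A : Set ((i : Fin d) → Fin (a i)))
    (hsep : ∀ j : Fin d, ∀ u v : (i : Fin d) → Fin (a i),
      (u j : ℕ) = 0 → (v j : ℕ) + 1 = a j →
      ∀ p : (gridD d a).Walk u v, p.IsPath → ∃ w ∈ p.support, w ∈ A) :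
    Percolates (gridD d a) d A := by
  classical
  set C := closure (gridD d a) d A
  refine Set.eq_univ_of_forall fun v₀ => by_contra fun hv₀ => ?_
  set D := reachAvoiding (gridD d a) C v₀
  have hface : ∀ j, (∀ w ∈ D, (w j : ℕ) ≠ 0) ∨ (∀ w ∈ D, (w j : ℕ) + 1 ≠ a j) := by
    by_contra! h
    obtain ⟨j, ⟨u, hu, hu0⟩, ⟨w, hw, hw1⟩⟩ := h
    obtain ⟨p, hp, havoid⟩ := exists_isPath_avoiding hu hw
    obtain ⟨x, hx, hxA⟩ := hsep j u w hu0 hw1 p hp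
    exact havoid x hx (subset_closure hxA)
  obtain ⟨v, hvD, c, hc⟩ :=
    exists_mem_forall_update_notMem D ⟨v₀, start_mem_reachAvoiding hv₀⟩ hface
  have hadj : ∀ j, (gridD d a).Adj v (Function.update v j (c j)) :=
    fun j => gridD_adj_update v (hc j).1
  have hne : ∀ j, c j ≠ v j := fun j => Fin.ne_of_val_ne (by have := (hc j).1; omega)
  refine notMem_of_mem_reachAvoiding hvD <| mem_closure_of_injective _
    (update_injective_of_forall_ne v c hne) hadj fun j => ?_
  by_contra hC
  exact (hc j).2 (mem_reachAvoiding_of_adj hvD (hadj j) hC)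

/-- **Theorem (Statement 9).** If every path between the two faces in each direction meets
`A`, then `A` percolates for the `d`-neighbour process in the grid. -/
theorem separating_set_percolates (d : ℕ) (hd : 1 ≤ d) (a : Fin d → ℕ)
    (ha : ∀ i, 1 ≤ a i) (A : Set ((i : Fin d) → Fin (a i)))
    (hsep : ∀ j : Fin d, ∀ u v : (i : Fin d) → Fin (a i),
      (u j : ℕ) = 0 → (v j : ℕ) + 1 = a j →
      ∀ p : (gridD d a).Walk u v, p.IsPath → ∃ w ∈ p.support, w ∈ A) :
    Percolates (gridD d a) d A :=
  separating_set_percolates_general d a A hsep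

end BP
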